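/- arXiv:math/0502484 — 4 statements merged into one kernel-verified Lean document; each statement's English description precedes it below -/
import Mathlib

section
/- Suppose q ∈ (0,1] satisfies q = Σ_{i=1}^∞ 2^{-n_i} with n_1 ≤ n_2 ≤ ... and n_i < n_{i+2} for all i. Then Σ_{i=1}^∞ n_i 2^{-n_i} ≤ -q log q / log 2 + 6q. -/
open Real

/-!
Write `n i = m + d i` with `m = n 0`, so that `d 0 = 0` and `d i ≥ i / 2`, and put
`S = ∑ 2^{-d i} = 2^m q`. Both sides of the inequality scale the same way under the shift by
`m`: the left side is `2^{-m} (m S + ∑ d i 2^{-d i})` and the right side is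
`2^{-m} (m S + S (6 - log₂ S))`. The term `i = 0` gives `S ≥ 1`; comparing `d` with the
sequence `0, 0, 1, 1, 2, 2, …` gives `S ≤ 4` and `∑ d i 2^{-d i} ≤ 5`; and
`S (6 - log₂ S) ≥ 5` on `[1, 4]`.
-/

lemma add_div_two_le_of_lt_add_two {n : ℕ → ℕ} (h01 : n 0 ≤ n 1)
    (htwice : ∀ i, n i < n (i + 2)) (i : ℕ) : n 0 + i / 2 ≤ n i := by
  induction i using Nat.strong_induction_on with
  | _ i ih =>
    match i with
    | 0 => simp
    | 1 => simpa using h01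
    | i + 2 =>
      have := ih i (by omega)
      have := htwice i
      omega

theorem HasSum.comp_div_two {M : Type*} [AddCommMonoid M] [TopologicalSpace M] [ContinuousAdd M]
    {f : ℕ → M} {a : M} (h : HasSum f a) : HasSum (fun i => f (i / 2)) (a + a) := by
  have heven : HasSum (fun k => f (2 * k / 2)) a := by
    simpa only [Nat.mul_div_cancel_left _ two_pos] using h
  have hodd : HasSum (fun k => f ((2 * k + 1) / 2)) a := by
    simpa only [Nat.mul_add_div two_pos, Nat.reduceDiv, add_zero] using h
  exact heven.even_add_odd hodd

lemma hasSum_inv_two_pow : HasSum (fun k : ℕ => ((2:ℝ) ^ k)⁻¹) 2 := by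
  simpa only [one_div, inv_pow] using hasSum_geometric_two

lemma hasSum_natCast_mul_inv_two_pow : HasSum (fun k : ℕ => (k : ℝ) * ((2:ℝ) ^ k)⁻¹) 2 := by
  have h := hasSum_coe_mul_geometric_of_norm_lt_one (r := (2:ℝ)⁻¹) (by norm_num)
  norm_num only at h
  simpa only [one_div, inv_pow] using h

lemma hasSum_max_one_mul_inv_two_pow :
    HasSum (fun k : ℕ => ((max k 1 : ℕ) : ℝ) * ((2:ℝ) ^ max k 1)⁻¹) (5 / 2) := by
  have h := hasSum_natCast_mul_inv_two_pow.add (hasSum_ite_eq 0 (2⁻¹ : ℝ))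
  norm_num only at h
  convert h using 1
  funext k
  rcases k with _ | k <;> simp

lemma natCast_mul_inv_two_pow_antitoneOn :
    AntitoneOn (fun d : ℕ => (d : ℝ) * ((2:ℝ) ^ d)⁻¹) {d | 1 ≤ d} := by
  refine antitoneOn_nat_Ici_of_succ_le fun d hd => ?_
  have hd' : (1:ℝ) ≤ d := by exact_mod_cast hd
  have h2d : (0:ℝ) < ((2:ℝ) ^ d)⁻¹ := by positivity
  push_cast
  rw [pow_succ, mul_inv]
  nlinarith

lemma natCast_mul_inv_two_pow_le_of_le {k d : ℕ} (hkd : k ≤ d) :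
    (d : ℝ) * ((2:ℝ) ^ d)⁻¹ ≤ ((max k 1 : ℕ) : ℝ) * ((2:ℝ) ^ max k 1)⁻¹ := by
  rcases Nat.eq_zero_or_pos d with rfl | hd
  · simp only [CharP.cast_eq_zero, zero_mul]
    positivity
  · exact natCast_mul_inv_two_pow_antitoneOn (le_max_right k 1) (Nat.one_le_iff_ne_zero.2 hd.ne')
      (max_le hkd hd)

lemma le_four_of_hasSum_inv_two_pow {d : ℕ → ℕ} (hd : ∀ i, i / 2 ≤ d i) {S : ℝ}
    (hS : HasSum (fun i => ((2:ℝ) ^ d i)⁻¹) S) : S ≤ 4 := by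
  have h4 : HasSum (fun i : ℕ => ((2:ℝ) ^ (i / 2))⁻¹) 4 := by
    convert hasSum_inv_two_pow.comp_div_two using 1
    norm_num
  exact hasSum_le (fun i => inv_anti₀ (by positivity) (pow_le_pow_right₀ one_le_two (hd i))) hS h4

lemma summable_natCast_mul_inv_two_pow_and_tsum_le_five {d : ℕ → ℕ} (hd : ∀ i, i / 2 ≤ d i) :
    Summable (fun i => (d i : ℝ) * ((2:ℝ) ^ d i)⁻¹) ∧
      ∑' i, (d i : ℝ) * ((2:ℝ) ^ d i)⁻¹ ≤ 5 := by
  have h5 : HasSum (fun i : ℕ => ((max (i / 2) 1 : ℕ) : ℝ) * ((2:ℝ) ^ max (i / 2) 1)⁻¹) 5 := by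
    convert hasSum_max_one_mul_inv_two_pow.comp_div_two using 1
    norm_num
  have hle := fun i => natCast_mul_inv_two_pow_le_of_le (hd i)
  have hsum := h5.summable.of_nonneg_of_le (fun i => by positivity) hle
  exact ⟨hsum, (hsum.tsum_le_tsum hle h5.summable).trans_eq h5.tsum_eq⟩

lemma five_le_mul_six_sub_logb {S : ℝ} (hS1 : 1 ≤ S) (hS4 : S ≤ 4) :
    5 ≤ S * (6 - logb 2 S) := by
  have hS0 : 0 < S := by linarith
  rcases le_total S 2 with hS2 | hS2
  · have : logb 2 S ≤ 1 := (logb_le_iff_le_rpow one_lt_two hS0).2 (by simpa using hS2)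
    nlinarith
  · have : logb 2 S ≤ 2 := (logb_le_iff_le_rpow one_lt_two hS0).2 (by norm_num; linarith)
    nlinarith

lemma hasSum_add_mul_inv_two_pow {d : ℕ → ℕ} {S T : ℝ} (m : ℕ)
    (hS : HasSum (fun i => ((2:ℝ) ^ d i)⁻¹) S)
    (hT : HasSum (fun i => (d i : ℝ) * ((2:ℝ) ^ d i)⁻¹) T) :
    HasSum (fun i => ((m + d i : ℕ) : ℝ) * ((2:ℝ) ^ (m + d i))⁻¹)
      (((2:ℝ) ^ m)⁻¹ * (m * S + T)) := by
  refine (((hS.mul_left (m : ℝ)).add hT).mul_left ((2:ℝ) ^ m)⁻¹).congr_fun fun i => ?_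
  push_cast
  rw [pow_add, mul_inv]
  ring

lemma neg_mul_log_div_log_two_add_six_mul_eq (m : ℕ) {q S : ℝ} (hS : 0 < S)
    (hq : q = ((2:ℝ) ^ m)⁻¹ * S) :
    -q * log q / log 2 + 6 * q = ((2:ℝ) ^ m)⁻¹ * (m * S + S * (6 - logb 2 S)) := by
  have hlog2 : log 2 ≠ 0 := (log_pos one_lt_two).ne'
  rw [hq, log_mul (by positivity) hS.ne', log_inv, log_pow, logb]
  field_simp
  ring

theorem tsum_add_mul_inv_two_pow_le (m : ℕ) {d : ℕ → ℕ} (hd0 : d 0 = 0)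
    (hd : ∀ i, i / 2 ≤ d i) {q : ℝ} (hq : HasSum (fun i => ((2:ℝ) ^ (m + d i))⁻¹) q) :
    ∑' i, ((m + d i : ℕ) : ℝ) * ((2:ℝ) ^ (m + d i))⁻¹ ≤ -q * log q / log 2 + 6 * q := by
  set S := 2 ^ m * q
  have hS : HasSum (fun i => ((2:ℝ) ^ d i)⁻¹) S := by
    refine (hq.mul_left (2 ^ m)).congr_fun fun i => ?_
    rw [pow_add, mul_inv, ← mul_assoc, mul_inv_cancel₀ (by positivity), one_mul]
  have hS1 : 1 ≤ S := by
    simpa [hd0] using le_hasSum hS 0 fun i _ => by positivity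
  obtain ⟨hT, hT5⟩ := summable_natCast_mul_inv_two_pow_and_tsum_le_five hd
  have hqS : q = ((2:ℝ) ^ m)⁻¹ * S := by
    rw [← mul_assoc, inv_mul_cancel₀ (by positivity), one_mul]
  rw [(hasSum_add_mul_inv_two_pow m hS hT.hasSum).tsum_eq,
    neg_mul_log_div_log_two_add_six_mul_eq m (by linarith) hqS]
  gcongr
  linarith [five_le_mul_six_sub_logb hS1 (le_four_of_hasSum_inv_two_pow hd hS)]

theorem stmt3_general (q : ℝ) (n : ℕ → ℕ)
    (hmono : Monotone n) (htwice : ∀ i, n i < n (i + 2))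
    (hsum : HasSum (fun i => ((2:ℝ) ^ n i)⁻¹) q) :
    ∑' i, (n i : ℝ) * ((2:ℝ) ^ n i)⁻¹ ≤ -q * Real.log q / Real.log 2 + 6 * q := by
  have hfloor := add_div_two_le_of_lt_add_two (hmono zero_le_one) htwice
  obtain ⟨m, d, hd0, hd, rfl⟩ :
      ∃ (m : ℕ) (d : ℕ → ℕ), d 0 = 0 ∧ (∀ i, i / 2 ≤ d i) ∧ n = fun i => m + d i :=
    ⟨n 0, fun i => n i - n 0, Nat.sub_self _, fun i => by beta_reduce; have := hfloor i; omega,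
      funext fun i => by beta_reduce; have := hfloor i; omega⟩
  exact_mod_cast tsum_add_mul_inv_two_pow_le m hd0 hd hsum

/-- If `q ∈ (0,1]` satisfies `q = ∑_i 2^{-n i}` with `n` nondecreasing and each value
appearing at most twice (`n i < n (i+2)`), then
`∑_i n i * 2^{-n i} ≤ -q * log q / log 2 + 6 q`. -/
theorem stmt3 (q : ℝ) (hq0 : 0 < q) (hq1 : q ≤ 1) (n : ℕ → ℕ)
    (hmono : Monotone n) (htwice : ∀ i, n i < n (i + 2))
    (hsum : HasSum (fun i => ((2:ℝ) ^ n i)⁻¹) q) :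
    ∑' i, (n i : ℝ) * ((2:ℝ) ^ n i)⁻¹ ≤ -q * Real.log q / Real.log 2 + 6 * q :=
  stmt3_general q n hmono htwice hsum
end

section
/- If X_1, X_2, ... are i.i.d. random variables with exponential tails and T is an ℕ-valued random variable (on the same space, not necessarily independent of the X_i) with exponential tails, then the random sum S_T = Σ_{k=1}^T X_k has exponential tails. -/
open MeasureTheory ProbabilityTheory

/-- A real random variable `W` has exponential tails if `P(|W| ≥ n) ≤ c · d^n` for some
`c > 0`, `0 < d < 1`, and all naturals `n`. -/
def ExpTails {Ω : Type*} [MeasurableSpace Ω] (P : Measure Ω) (W : Ω → ℝ) : Prop :=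
  ∃ c : ℝ, 0 < c ∧ ∃ d : ℝ, 0 < d ∧ d < 1 ∧
    ∀ n : ℕ, P {ω | (n : ℝ) ≤ |W ω|} ≤ ENNReal.ofReal (c * d ^ n)

/-!
Choose `t > 0` with `e^t d < 1`, so that `M = E e^{t|X₀|}` is finite. On `{T < m}` we have
`|S_T| ≤ ∑_{i<m} |X_i|`, and the Chernoff bound for this i.i.d. sum gives
`P(|S_T| ≥ n) ≤ P(T ≥ m) + e^{-tn} M^m`.
With `m = ⌊n/L⌋ + 1` and `L` so large that `M ≤ e^{tL/2}`, both terms decay geometrically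
in `n`, at rates `d_T^{1/L}` and `e^{-t/2}`.
-/

open Real

lemma exists_pos_exp_mul_lt_one {d : ℝ} (hd0 : 0 < d) (hd1 : d < 1) :
    ∃ t > 0, exp t * d < 1 := by
  have hlog : 0 < -log d := neg_pos.2 (log_neg hd0 hd1)
  refine ⟨-log d / 2, by positivity, ?_⟩
  calc exp (-log d / 2) * d < exp (-log d) * d := by gcongr; linarith
    _ = 1 := by rw [exp_neg, exp_log hd0, inv_mul_cancel₀ hd0.ne']

lemma ofReal_exp_mul_le_tsum_indicator {t : ℝ} (ht : 0 ≤ t) {x : ℝ} (hx : 0 ≤ x) :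
    ENNReal.ofReal (exp (t * x)) ≤
      ∑' n : ℕ, {y : ℝ | (n : ℝ) ≤ y}.indicator
        (fun _ => ENNReal.ofReal (exp (t * (n + 1)))) x := by
  have hmem : x ∈ {y : ℝ | (⌊x⌋₊ : ℝ) ≤ y} := Nat.floor_le hx
  refine le_trans ?_ (ENNReal.le_tsum ⌊x⌋₊)
  rw [Set.indicator_of_mem hmem]
  gcongr
  exact (Nat.lt_floor_add_one x).le

lemma integrable_exp_mul_abs_of_measure_le {Ω : Type*} [MeasurableSpace Ω] {P : Measure Ω}
    {W : Ω → ℝ} (hW : Measurable W) {c d t : ℝ} (hc : 0 ≤ c) (hd : 0 ≤ d) (ht : 0 ≤ t)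
    (hdt : exp t * d < 1)
    (htail : ∀ n : ℕ, P {ω | (n : ℝ) ≤ |W ω|} ≤ ENNReal.ofReal (c * d ^ n)) :
    Integrable (fun ω => exp (t * |W ω|)) P := by
  refine ⟨(hW.abs.const_mul t).exp.aestronglyMeasurable, ?_⟩
  rw [hasFiniteIntegral_iff_ofReal (.of_forall fun ω => (exp_pos _).le)]
  have hsets (n : ℕ) : MeasurableSet {ω | (n : ℝ) ≤ |W ω|} :=
    measurableSet_le measurable_const hW.abs
  have hsum : Summable fun n : ℕ => c * exp t * (exp t * d) ^ n :=
    (summable_geometric_of_lt_one (by positivity) hdt).mul_left _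
  calc ∫⁻ ω, ENNReal.ofReal (exp (t * |W ω|)) ∂P
      ≤ ∫⁻ ω, ∑' n : ℕ, {ω | (n : ℝ) ≤ |W ω|}.indicator
          (fun _ => ENNReal.ofReal (exp (t * (n + 1)))) ω ∂P :=
        lintegral_mono fun ω => ofReal_exp_mul_le_tsum_indicator ht (abs_nonneg _)
    _ = ∑' n : ℕ, ENNReal.ofReal (exp (t * (n + 1))) * P {ω | (n : ℝ) ≤ |W ω|} := by
        rw [lintegral_tsum fun n => (measurable_const.indicator (hsets n)).aemeasurable]
        simp_rw [lintegral_indicator_const (hsets _)]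
    _ ≤ ∑' n : ℕ, ENNReal.ofReal (c * exp t * (exp t * d) ^ n) := by
        refine ENNReal.tsum_le_tsum fun n => ?_
        grw [htail n, ← ENNReal.ofReal_mul (exp_pos _).le]
        rw [mul_add_one, exp_add, mul_comm t, exp_nat_mul]
        exact le_of_eq (by ring_nf)
    _ < ⊤ := by
        rw [← ENNReal.ofReal_tsum_of_nonneg (fun n => by positivity) hsum]
        exact ENNReal.ofReal_lt_top

lemma measure_le_sum_abs_le_exp_mul_mgf_pow {Ω : Type*} [MeasurableSpace Ω] {P : Measure Ω}
    {X : ℕ → Ω → ℝ} (hmeas : ∀ i, Measurable (X i)) (hindep : iIndepFun X P)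
    (hident : ∀ i, IdentDistrib (X i) (X 0) P P) {t : ℝ} (ht : 0 ≤ t)
    (hint : Integrable (fun ω => exp (t * |X 0 ω|)) P) (x : ℝ) (m : ℕ) :
    P {ω | x ≤ ∑ i ∈ Finset.range m, |X i ω|} ≤
      ENNReal.ofReal (exp (-t * x) * mgf (fun ω => |X 0 ω|) P t ^ m) := by
  have := hindep.isProbabilityMeasure
  set Y : ℕ → Ω → ℝ := fun i ω => |X i ω|
  have hYmeas (i : ℕ) : Measurable (Y i) := (hmeas i).abs
  have hYindep : iIndepFun Y P := hindep.comp (fun _ => abs) fun _ => measurable_abs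
  have hYident (i : ℕ) :
      IdentDistrib (fun ω => exp (t * Y i ω)) (fun ω => exp (t * Y 0 ω)) P P :=
    (hident i).comp (measurable_abs.const_mul t).exp
  have hmgf : mgf (∑ i ∈ Finset.range m, Y i) P t = mgf (Y 0) P t ^ m := by
    rw [hYindep.mgf_sum hYmeas, Finset.prod_eq_pow_card (f := fun i => mgf (Y i) P t)
      (b := mgf (Y 0) P t) fun i _ => (hYident i).integral_eq, Finset.card_range]
  have hchernoff := measure_ge_le_exp_mul_mgf x ht
    (hYindep.integrable_exp_mul_sum hYmeas (s := Finset.range m) fun i _ =>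
      (hYident i).integrable_iff.2 hint)
  rw [hmgf, measureReal_def] at hchernoff
  simp only [Finset.sum_apply] at hchernoff
  rw [← ENNReal.ofReal_toReal (measure_ne_top P _)]
  exact ENNReal.ofReal_le_ofReal hchernoff

lemma setOf_le_abs_sum_subset {Ω : Type*} (X : ℕ → Ω → ℝ) (T : Ω → ℕ) (x : ℝ) (m : ℕ) :
    {ω | x ≤ |∑ k ∈ Finset.range (T ω), X k ω|} ⊆
      {ω | m ≤ T ω} ∪ {ω | x ≤ ∑ i ∈ Finset.range m, |X i ω|} := by
  intro ω hω
  by_cases hTm : m ≤ T ω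
  · exact Or.inl hTm
  · refine Or.inr ?_
    calc x ≤ |∑ k ∈ Finset.range (T ω), X k ω| := hω
      _ ≤ ∑ k ∈ Finset.range (T ω), |X k ω| := Finset.abs_sum_le_sum_abs _ _
      _ ≤ ∑ i ∈ Finset.range m, |X i ω| :=
        Finset.sum_le_sum_of_subset_of_nonneg (Finset.range_subset_range.2 (by omega))
          fun i _ _ => abs_nonneg _

lemma exists_nat_le_exp_mul_div_two {t : ℝ} (ht : 0 < t) (M : ℝ) :
    ∃ L : ℕ, 0 < L ∧ M ≤ exp (t * L / 2) := by
  obtain ⟨L, hL⟩ := exists_nat_gt (2 * M / t)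
  refine ⟨L + 1, L.succ_pos, ?_⟩
  have : M < t * (L + 1 : ℕ) / 2 := by push_cast; rw [div_lt_iff₀ ht] at hL; linarith
  linarith [add_one_le_exp (t * (L + 1 : ℕ) / 2)]

lemma exp_neg_mul_mul_pow_div_add_one_le {t M : ℝ} (ht : 0 ≤ t) (hM : 0 ≤ M) {L : ℕ}
    (hML : M ≤ exp (t * L / 2)) (n : ℕ) :
    exp (-t * n) * M ^ (n / L + 1) ≤ M * exp (-(t / 2)) ^ n := by
  have hdiv : ((n / L : ℕ) : ℝ) * L ≤ n := by exact_mod_cast Nat.div_mul_le_self n L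
  have hpow : M ^ (n / L) ≤ exp (t * n / 2) :=
    calc M ^ (n / L) ≤ exp (t * L / 2) ^ (n / L) := pow_le_pow_left₀ hM hML _
      _ = exp ((n / L : ℕ) * (t * L / 2)) := (exp_nat_mul _ _).symm
      _ ≤ exp (t * n / 2) := exp_le_exp.2 (by nlinarith)
  calc exp (-t * n) * M ^ (n / L + 1) = M * (exp (-t * n) * M ^ (n / L)) := by ring
    _ ≤ M * (exp (-t * n) * exp (t * n / 2)) := by gcongr
    _ = M * exp (-(t / 2)) ^ n := by rw [← exp_add, ← exp_nat_mul]; ring_nf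

lemma pow_div_add_one_le_rpow_inv_pow {d : ℝ} (hd0 : 0 ≤ d) (hd1 : d ≤ 1) {L : ℕ}
    (hL : 0 < L) (n : ℕ) : d ^ (n / L + 1) ≤ (d ^ (L⁻¹ : ℝ)) ^ n := by
  have hroot : (d ^ (L⁻¹ : ℝ)) ^ L = d := by
    rw [← rpow_natCast, ← rpow_mul hd0, inv_mul_cancel₀ (by positivity), rpow_one]
  calc d ^ (n / L + 1) = (d ^ (L⁻¹ : ℝ)) ^ (L * (n / L + 1)) := by rw [pow_mul, hroot]
    _ ≤ (d ^ (L⁻¹ : ℝ)) ^ n := by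
      refine pow_le_pow_of_le_one (by positivity) (rpow_le_one hd0 hd1 (by positivity)) ?_
      have := Nat.lt_mul_div_succ n hL
      omega

lemma ExpTails.of_subset_union {Ω : Type*} [MeasurableSpace Ω] {P : Measure Ω} {W : Ω → ℝ}
    {A B : ℕ → Set Ω} {c₁ c₂ r₁ r₂ : ℝ} (hc₁ : 0 < c₁) (hc₂ : 0 ≤ c₂) (hr₁ : 0 < r₁)
    (hr₁' : r₁ < 1) (hr₂ : 0 < r₂) (hr₂' : r₂ < 1)
    (hA : ∀ n, P (A n) ≤ ENNReal.ofReal (c₁ * r₁ ^ n))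
    (hB : ∀ n, P (B n) ≤ ENNReal.ofReal (c₂ * r₂ ^ n))
    (hsub : ∀ n : ℕ, {ω | (n : ℝ) ≤ |W ω|} ⊆ A n ∪ B n) : ExpTails P W := by
  refine ⟨c₁ + c₂, by positivity, max r₁ r₂, lt_max_of_lt_left hr₁, max_lt hr₁' hr₂',
    fun n => ?_⟩
  calc P {ω | (n : ℝ) ≤ |W ω|} ≤ P (A n ∪ B n) := measure_mono (hsub n)
    _ ≤ P (A n) + P (B n) := measure_union_le _ _
    _ ≤ ENNReal.ofReal (c₁ * r₁ ^ n) + ENNReal.ofReal (c₂ * r₂ ^ n) :=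
      add_le_add (hA n) (hB n)
    _ = ENNReal.ofReal (c₁ * r₁ ^ n + c₂ * r₂ ^ n) := by
      rw [ENNReal.ofReal_add] <;> positivity
    _ ≤ ENNReal.ofReal ((c₁ + c₂) * max r₁ r₂ ^ n) := by
      gcongr
      rw [add_mul]
      gcongr <;> simp

theorem stmt13_general {Ω : Type*} [MeasurableSpace Ω] (P : Measure Ω)
    (X : ℕ → Ω → ℝ) (hmeas : ∀ i, Measurable (X i))
    (hindep : iIndepFun X P)
    (hident : ∀ i, IdentDistrib (X i) (X 0) P P)
    (htails : ExpTails P (X 0))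
    (T : Ω → ℕ) (hT : ExpTails P (fun ω => (T ω : ℝ))) :
    ExpTails P (fun ω => ∑ k ∈ Finset.range (T ω), X k ω) := by
  obtain ⟨c, hc, d, hd0, hd1, htail⟩ := htails
  obtain ⟨cT, hcT, dT, hdT0, hdT1, htailT⟩ := hT
  obtain ⟨t, ht, hdt⟩ := exists_pos_exp_mul_lt_one hd0 hd1
  have hint := integrable_exp_mul_abs_of_measure_le (hmeas 0) hc.le hd0.le ht.le hdt htail
  obtain ⟨L, hL, hML⟩ := exists_nat_le_exp_mul_div_two ht (mgf (fun ω => |X 0 ω|) P t)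
  have hTtail (n : ℕ) :
      P {ω | n / L + 1 ≤ T ω} ≤ ENNReal.ofReal (cT * (dT ^ (L⁻¹ : ℝ)) ^ n) := by
    calc P {ω | n / L + 1 ≤ T ω} = P {ω | ((n / L + 1 : ℕ) : ℝ) ≤ |(T ω : ℝ)|} := by
          simp only [Nat.abs_cast, Nat.cast_le]
      _ ≤ ENNReal.ofReal (cT * (dT ^ (L⁻¹ : ℝ)) ^ n) := by
          grw [htailT, pow_div_add_one_le_rpow_inv_pow hdT0.le hdT1.le hL n]
  have hsumTail (n : ℕ) : P {ω | (n : ℝ) ≤ ∑ i ∈ Finset.range (n / L + 1), |X i ω|} ≤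
      ENNReal.ofReal (mgf (fun ω => |X 0 ω|) P t * exp (-(t / 2)) ^ n) :=
    (measure_le_sum_abs_le_exp_mul_mgf_pow hmeas hindep hident ht.le hint n _).trans
      (ENNReal.ofReal_le_ofReal (exp_neg_mul_mul_pow_div_add_one_le ht.le mgf_nonneg hML n))
  exact ExpTails.of_subset_union hcT mgf_nonneg (rpow_pos_of_pos hdT0 _)
    (rpow_lt_one hdT0.le hdT1 (by positivity)) (exp_pos _) (exp_lt_one_iff.2 (by linarith))
    hTtail hsumTail fun n => setOf_le_abs_sum_subset X T n (n / L + 1)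

/-- If `X 0, X 1, ...` are i.i.d. with exponential tails and `T` is an `ℕ`-valued random
variable (on the same space, not necessarily independent of the `X i`) with exponential
tails, then the random sum `S_T = ∑_{k<T} X k` has exponential tails. -/
theorem stmt13 {Ω : Type*} [MeasurableSpace Ω] (P : Measure Ω) [IsProbabilityMeasure P]
    (X : ℕ → Ω → ℝ) (hmeas : ∀ i, Measurable (X i))
    (hindep : iIndepFun X P)
    (hident : ∀ i, IdentDistrib (X i) (X 0) P P)
    (htails : ExpTails P (X 0))
    (T : Ω → ℕ) (hT : ExpTails P (fun ω => (T ω : ℝ))) :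
    ExpTails P (fun ω => ∑ k ∈ Finset.range (T ω), X k ω) :=
  stmt13_general P X hmeas hindep hident htails T hT
end

section
/- Let (T,S) be the simulation of q^ℓ from unbiased bits given by the interval-partition construction. Then P(T_{λ} ≥ n) decays exponentially in n whenever λ is an ℕ-valued random variable with exponential tails independent of the bits; specifically, using P(T_k ≥ n) ≤ (b^k + 1)/2^n and choosing d = log 2/(2 log b), one gets P(T_λ ≥ n) ≤ P(λ ≥ dn) + (b^{dn}+1)/2^n, which decays exponentially. -/
/-!
On the event `{λ < m}`, `T_λ ≥ n` forces `T_k ≥ n` for some `k < m`, so a union bound gives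
`P(T_λ ≥ n) ≤ P(λ ≥ m) + m (b^m + 1) / 2^n`. Take `m = ⌊n / 4b⌋`: the first term decays
exponentially because `λ` has exponential tails, and `m (b^m + 1) ≤ 2 · 2^⌊n/2⌋` (from
`m < 2^m` and `b < 2^b`) bounds the second by `2 · 2^(-⌊n/2⌋)`.
-/

open MeasureTheory ProbabilityTheory Finset

open scoped ENNReal

def ExpDecay (u : ℕ → ℝ≥0∞) : Prop :=
  ∃ c : ℝ, 0 < c ∧ ∃ d : ℝ, 0 < d ∧ d < 1 ∧ ∀ n, u n ≤ ENNReal.ofReal (c * d ^ n)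

namespace ExpDecay

variable {u v : ℕ → ℝ≥0∞}

theorem mono (hv : ExpDecay v) (h : ∀ n, u n ≤ v n) : ExpDecay u := by
  obtain ⟨c, hc, d, hd0, hd1, hvn⟩ := hv
  exact ⟨c, hc, d, hd0, hd1, fun n => (h n).trans (hvn n)⟩

theorem add (hu : ExpDecay u) (hv : ExpDecay v) : ExpDecay (fun n => u n + v n) := by
  obtain ⟨c₁, hc₁, d₁, hd₁0, hd₁1, hun⟩ := hu
  obtain ⟨c₂, hc₂, d₂, hd₂0, hd₂1, hvn⟩ := hv
  refine ⟨c₁ + c₂, by positivity, max d₁ d₂, lt_max_of_lt_left hd₁0, max_lt hd₁1 hd₂1,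
    fun n => ?_⟩
  have hpow₁ : d₁ ^ n ≤ max d₁ d₂ ^ n := pow_le_pow_left₀ hd₁0.le (le_max_left _ _) n
  have hpow₂ : d₂ ^ n ≤ max d₁ d₂ ^ n := pow_le_pow_left₀ hd₂0.le (le_max_right _ _) n
  calc u n + v n ≤ ENNReal.ofReal (c₁ * d₁ ^ n) + ENNReal.ofReal (c₂ * d₂ ^ n) :=
        add_le_add (hun n) (hvn n)
    _ = ENNReal.ofReal (c₁ * d₁ ^ n + c₂ * d₂ ^ n) :=
        (ENNReal.ofReal_add (by positivity) (by positivity)).symm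
    _ ≤ ENNReal.ofReal ((c₁ + c₂) * max d₁ d₂ ^ n) := by
        gcongr
        nlinarith

theorem comp_div (hu : ExpDecay u) {k : ℕ} (hk : 0 < k) : ExpDecay (fun n => u (n / k)) := by
  obtain ⟨c, hc, d, hd0, hd1, hun⟩ := hu
  have hkR : (0 : ℝ) < k := by exact_mod_cast hk
  refine ⟨c / d, by positivity, d ^ (k : ℝ)⁻¹, Real.rpow_pos_of_pos hd0 _,
    Real.rpow_lt_one hd0.le hd1 (by positivity), fun n => (hun (n / k)).trans ?_⟩
  have hexp : (n : ℝ) * (k : ℝ)⁻¹ ≤ ((n / k + 1 : ℕ) : ℝ) := by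
    rw [← div_eq_mul_inv, div_le_iff₀ hkR]
    have : n ≤ (n / k + 1) * k := by
      rw [add_mul, one_mul]; exact (Nat.lt_div_mul_add hk).le
    exact_mod_cast this
  have hpow : d ^ (n / k + 1) ≤ (d ^ (k : ℝ)⁻¹) ^ n := by
    rw [← Real.rpow_natCast, ← Real.rpow_natCast, ← Real.rpow_mul hd0.le, mul_comm]
    exact Real.rpow_le_rpow_of_exponent_ge hd0 hd1.le hexp
  refine ENNReal.ofReal_le_ofReal ?_
  calc c * d ^ (n / k) = c / d * d ^ (n / k + 1) := by field_simp; ring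
    _ ≤ c / d * (d ^ (k : ℝ)⁻¹) ^ n := by gcongr

end ExpDecay

theorem expDecay_two_mul_inv_two_pow : ExpDecay (fun n => 2 * 2⁻¹ ^ n) :=
  ⟨2, two_pos, 2⁻¹, by norm_num, by norm_num, fun n => by
    rw [ENNReal.ofReal_mul zero_le_two, ENNReal.ofReal_pow (by norm_num), ENNReal.ofReal_inv_of_pos
      two_pos, ENNReal.ofReal_ofNat]⟩

theorem Nat.div_mul_pow_div_add_one_le {b : ℕ} (hb : 0 < b) (n : ℕ) :
    n / (4 * b) * (b ^ (n / (4 * b)) + 1) ≤ 2 * 2 ^ (n / 2) := by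
  set m := n / (4 * b)
  have hm : m < 2 ^ m := Nat.lt_two_pow_self
  have hbm : b ^ m ≤ 2 ^ (b * m) := by
    rw [pow_mul]
    exact Nat.pow_le_pow_left Nat.lt_two_pow_self.le m
  have hexp : m + b * m ≤ n / 2 := by
    have : 2 * b * m ≤ n / 2 := by
      rw [show m = n / 2 / (2 * b) by
        rw [Nat.div_div_eq_div_mul, ← mul_assoc]; rfl, mul_comm]
      exact Nat.div_mul_le_self _ _
    nlinarith
  calc m * (b ^ m + 1) ≤ 2 ^ m * (2 * 2 ^ (b * m)) := by
        gcongr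
        have : 1 ≤ b ^ m := Nat.one_le_pow _ _ hb
        omega
    _ = 2 * 2 ^ (m + b * m) := by ring
    _ ≤ 2 * 2 ^ (n / 2) := by gcongr; norm_num

theorem ENNReal.two_mul_two_pow_div_le {j n : ℕ} (h : 2 * j ≤ n) :
    2 * 2 ^ j / 2 ^ n ≤ (2 : ℝ≥0∞) * 2⁻¹ ^ j := by
  rw [ENNReal.div_le_iff (by positivity) (by simp)]
  have hcancel : (2 : ℝ≥0∞)⁻¹ ^ j * 2 ^ j = 1 := by
    rw [← ENNReal.inv_pow, ENNReal.inv_mul_cancel (by positivity) (by simp)]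
  calc (2 : ℝ≥0∞) * 2 ^ j = 2 * (2⁻¹ ^ j * 2 ^ j) * 2 ^ j := by rw [hcancel, mul_one]
    _ = 2 * 2⁻¹ ^ j * 2 ^ (2 * j) := by ring
    _ ≤ 2 * 2⁻¹ ^ j * 2 ^ n := by gcongr; norm_num

section Tails

variable {Ω : Type*} [MeasurableSpace Ω] {μ : Measure Ω}

theorem measure_le_comp_le_add_sum (T : ℕ → Ω → ℕ) (lam : Ω → ℕ) (m n : ℕ) :
    μ {ω | n ≤ T (lam ω) ω} ≤ μ {ω | m ≤ lam ω} + ∑ k ∈ range m, μ {ω | n ≤ T k ω} := by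
  have hsub : {ω | n ≤ T (lam ω) ω} ⊆ {ω | m ≤ lam ω} ∪ ⋃ k ∈ range m, {ω | n ≤ T k ω} := by
    intro ω hω
    by_cases h : m ≤ lam ω
    · exact Or.inl h
    · exact Or.inr (Set.mem_biUnion (mem_range.mpr (not_le.mp h)) hω)
  calc μ {ω | n ≤ T (lam ω) ω}
      ≤ μ {ω | m ≤ lam ω} + μ (⋃ k ∈ range m, {ω | n ≤ T k ω}) :=
        (measure_mono hsub).trans (measure_union_le _ _)
    _ ≤ μ {ω | m ≤ lam ω} + ∑ k ∈ range m, μ {ω | n ≤ T k ω} := by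
        gcongr
        exact measure_biUnion_finset_le _ _

theorem sum_measure_le_le_two_mul_inv_two_pow {b : ℕ} (hb : 0 < b) {T : ℕ → Ω → ℕ}
    (hT : ∀ k n : ℕ, μ {ω | n ≤ T k ω} ≤ ((b : ℝ≥0∞) ^ k + 1) / 2 ^ n) (n : ℕ) :
    ∑ k ∈ range (n / (4 * b)), μ {ω | n ≤ T k ω} ≤ 2 * 2⁻¹ ^ (n / 2) := by
  set m := n / (4 * b)
  have hb1 : (1 : ℝ≥0∞) ≤ b := by exact_mod_cast hb
  calc ∑ k ∈ range m, μ {ω | n ≤ T k ω}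
      ≤ ∑ _k ∈ range m, ((b : ℝ≥0∞) ^ m + 1) / 2 ^ n :=
        sum_le_sum fun k hk => (hT k n).trans <| by
          gcongr
          exact (mem_range.mp hk).le
    _ = ((m * (b ^ m + 1) : ℕ) : ℝ≥0∞) / 2 ^ n := by
        rw [sum_const, card_range, nsmul_eq_mul, ← mul_div_assoc]
        push_cast
        rfl
    _ ≤ ((2 * 2 ^ (n / 2) : ℕ) : ℝ≥0∞) / 2 ^ n := by
        gcongr ?_ / _
        exact_mod_cast Nat.div_mul_pow_div_add_one_le hb n
    _ ≤ 2 * 2⁻¹ ^ (n / 2) := by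
        push_cast
        exact ENNReal.two_mul_two_pow_div_le (Nat.mul_div_le n 2)

end Tails

theorem stmt16_general {Ω : Type*} [MeasurableSpace Ω] (P : Measure Ω)
    (b : ℕ) (hb : 2 ≤ b) (T : ℕ → Ω → ℕ)
    (hT : ∀ k n : ℕ, P {ω | n ≤ T k ω} ≤ ((b : ENNReal) ^ k + 1) / 2 ^ n)
    (lam : Ω → ℕ)
    (hlam : ∃ c : ℝ, 0 < c ∧ ∃ d : ℝ, 0 < d ∧ d < 1 ∧
      ∀ n : ℕ, P {ω | n ≤ lam ω} ≤ ENNReal.ofReal (c * d ^ n)) :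
    ∃ c : ℝ, 0 < c ∧ ∃ d : ℝ, 0 < d ∧ d < 1 ∧
      ∀ n : ℕ, P {ω | n ≤ T (lam ω) ω} ≤ ENNReal.ofReal (c * d ^ n) := by
  have hb0 : 0 < b := by omega
  have hlamTail : ExpDecay (fun n => P {ω | n / (4 * b) ≤ lam ω}) :=
    ExpDecay.comp_div (u := fun m => P {ω | m ≤ lam ω}) hlam (by omega)
  have hsumTail : ExpDecay (fun n => 2 * 2⁻¹ ^ (n / 2)) :=
    expDecay_two_mul_inv_two_pow.comp_div two_pos
  refine (hlamTail.add hsumTail).mono fun n => ?_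
  exact (measure_le_comp_le_add_sum T lam _ n).trans
    (add_le_add_right (sum_measure_le_le_two_mul_inv_two_pow hb0 hT n) _)

/-- Let `T k` be the stopping time of the interval-partition simulation of `q^k` from
unbiased bits, satisfying `P(T k ≥ n) ≤ (b^k + 1)/2^n`, and let `lam` be an `ℕ`-valued
random variable, independent of the bit sequence (hence of the family `(T k)`), whose
tails decay exponentially.  Then `P(T_lam ≥ n)` decays exponentially in `n`. -/
theorem stmt16 {Ω : Type*} [MeasurableSpace Ω] (P : Measure Ω) [IsProbabilityMeasure P]
    (b : ℕ) (hb : 2 ≤ b) (T : ℕ → Ω → ℕ)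
    (hmeas : ∀ k, Measurable (T k))
    (hT : ∀ k n : ℕ, P {ω | n ≤ T k ω} ≤ ((b : ENNReal) ^ k + 1) / 2 ^ n)
    (lam : Ω → ℕ) (hlammeas : Measurable lam)
    (hindep : IndepFun lam (fun ω => fun k => T k ω) P)
    (hlam : ∃ c : ℝ, 0 < c ∧ ∃ d : ℝ, 0 < d ∧ d < 1 ∧
      ∀ n : ℕ, P {ω | n ≤ lam ω} ≤ ENNReal.ofReal (c * d ^ n)) :
    ∃ c : ℝ, 0 < c ∧ ∃ d : ℝ, 0 < d ∧ d < 1 ∧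
      ∀ n : ℕ, P {ω | n ≤ T (lam ω) ω} ≤ ENNReal.ofReal (c * d ^ n) :=
  stmt16_general P b hb T hT lam hlam
end

section
/- Let p be a probability vector on A with full support, π the marker pattern of length t, and define marker locations R_k as the successive occurrences of π in an i.i.d. p-sequence indexed by ℤ (with R_1 the first marker at a nonnegative index and R_0 the last marker at a negative index). Then the inter-marker gaps (R_{k+1} - R_k) for k ≠ 0 are identically distributed with exponential tails, and the central gap R_1 - R_0 also has exponential tails. -/
/-!
Whether `i` is a marker depends only on `x i, …, x (i + t - 1)`, and distinct markers are at
distance at least `t`. Hence, for `k ≥ 1`, the event `R k = i ∧ R (k + 1) = i + g` is the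
intersection of an event of the window `[0, i)` ("`k - 1` markers in `[0, i - t]`") and an event
of the adjacent window `[i, i + g + t)` ("markers at `i` and `i + g`, none in between").
Independence and shift invariance give `P (R (k + 1) - R k = g) = c k * β g` with `β` not
depending on `k`, and summing over `g` forces `c k = (∑ β)⁻¹`; for `k ≤ -1` one counts the
markers in `(R (k + 1), 0)` instead. A marker-free stretch of length `L` contains `L / t` disjoint
`t`-blocks without a marker, which has probability `(1 - P (marker at 0)) ^ (L / t)`; this gives
the exponential tails.
-/

open MeasureTheory ProbabilityTheory
open scoped ENNReal

structure IsCenteredEnum (M : ℤ → Prop) (R : ℤ → ℤ) : Prop where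
  mem : ∀ k, M (R k)
  strictMono : StrictMono R
  apply_one_nonneg : 0 ≤ R 1
  apply_zero_neg : R 0 < 0
  notMem_of_lt_of_lt : ∀ k i, R k < i → i < R (k + 1) → ¬ M i

namespace IsCenteredEnum

variable {M : ℤ → Prop} {R : ℤ → ℤ}

lemma add_natCast_le (hR : IsCenteredEnum M R) (k : ℤ) : ∀ n : ℕ, R k + n ≤ R (k + n)
  | 0 => by simp
  | n + 1 => by
    have := hR.add_natCast_le k n
    have := hR.strictMono (lt_add_one (k + n))
    rw [Nat.cast_succ, ← add_assoc k]
    omega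

lemma apply_neg (hR : IsCenteredEnum M R) {k : ℤ} (hk : k ≤ 0) : R k < 0 :=
  (hR.strictMono.monotone hk).trans_lt hR.apply_zero_neg

lemma apply_nonneg (hR : IsCenteredEnum M R) {k : ℤ} (hk : 1 ≤ k) : 0 ≤ R k :=
  hR.apply_one_nonneg.trans (hR.strictMono.monotone hk)

lemma exists_eq (hR : IsCenteredEnum M R) {i : ℤ} (hi : M i) : ∃ k, R k = i := by
  have hbdd : ∃ b, ∀ k, R k ≤ i → k ≤ b := by
    refine ⟨max 0 (i - R 0), fun k hk => ?_⟩
    by_contra! h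
    have := hR.add_natCast_le 0 k.toNat
    rw [zero_add, Int.toNat_of_nonneg (by omega)] at this
    omega
  have hex : ∃ k, R k ≤ i := by
    refine ⟨-(R 0 - i).toNat, ?_⟩
    have := hR.add_natCast_le (-(R 0 - i).toNat) (R 0 - i).toNat
    simp only [neg_add_cancel] at this
    omega
  obtain ⟨k, hk, hmax⟩ := Int.exists_greatest_of_bdd hbdd hex
  refine ⟨k, hk.antisymm (not_lt.mp fun hlt => hR.notMem_of_lt_of_lt k i hlt ?_ hi)⟩
  by_contra! h
  have := hmax (k + 1) h
  omega

lemma succ_eq_of_forall_notMem (hR : IsCenteredEnum M R) {k j : ℤ} (hj : M j) (hkj : R k < j)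
    (hbetween : ∀ l, R k < l → l < j → ¬ M l) : R (k + 1) = j := by
  obtain ⟨m, rfl⟩ := hR.exists_eq hj
  have hkm : k < m := hR.strictMono.lt_iff_lt.mp hkj
  by_contra hne
  have hlt : R (k + 1) < R m := hR.strictMono (lt_of_le_of_ne hkm (by rintro rfl; exact hne rfl))
  exact hbetween _ (hR.strictMono (lt_add_one k)) hlt (hR.mem _)

lemma card_filter_Ico_zero (hR : IsCenteredEnum M R) [DecidablePred M] (k : ℤ) :
    ((Finset.Ico 0 (R k)).filter M).card = (k - 1).toNat := by
  have : (Finset.Ico 0 (R k)).filter M = (Finset.Ico 1 k).image R := by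
    ext j
    simp only [Finset.mem_filter, Finset.mem_Ico, Finset.mem_image]
    constructor
    · rintro ⟨⟨hj0, hjk⟩, hj⟩
      obtain ⟨m, rfl⟩ := hR.exists_eq hj
      refine ⟨m, ⟨?_, hR.strictMono.lt_iff_lt.mp hjk⟩, rfl⟩
      by_contra! h
      exact absurd (hR.apply_neg (k := m) (by omega)) (not_lt.mpr hj0)
    · rintro ⟨m, ⟨hm, hmk⟩, rfl⟩
      exact ⟨⟨hR.apply_nonneg hm, hR.strictMono hmk⟩, hR.mem m⟩
  rw [this, Finset.card_image_of_injective _ hR.strictMono.injective, Int.card_Ico]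

lemma card_filter_Ioo_zero (hR : IsCenteredEnum M R) [DecidablePred M] (k : ℤ) :
    ((Finset.Ioo (R k) 0).filter M).card = (-k).toNat := by
  have : (Finset.Ioo (R k) 0).filter M = (Finset.Ico (k + 1) 1).image R := by
    ext j
    simp only [Finset.mem_filter, Finset.mem_Ioo, Finset.mem_Ico, Finset.mem_image]
    constructor
    · rintro ⟨⟨hkj, hj0⟩, hj⟩
      obtain ⟨m, rfl⟩ := hR.exists_eq hj
      refine ⟨m, ⟨by have := hR.strictMono.lt_iff_lt.mp hkj; omega, ?_⟩, rfl⟩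
      by_contra! h
      exact absurd (hR.apply_nonneg h) (not_le.mpr hj0)
    · rintro ⟨m, ⟨hkm, hm⟩, rfl⟩
      exact ⟨⟨hR.strictMono (by omega), hR.apply_neg (by omega)⟩, hR.mem m⟩
  rw [this, Finset.card_image_of_injective _ hR.strictMono.injective, Int.card_Ico]
  omega

lemma eq_iff_card_filter_Ico (hR : IsCenteredEnum M R) [DecidablePred M] {k i : ℤ} (hk : 1 ≤ k)
    (hi : 0 ≤ i) : R k = i ↔ M i ∧ ((Finset.Ico 0 i).filter M).card = (k - 1).toNat := by
  refine ⟨fun h => h ▸ ⟨hR.mem k, hR.card_filter_Ico_zero k⟩, fun ⟨hMi, hcard⟩ => ?_⟩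
  obtain ⟨m, rfl⟩ := hR.exists_eq hMi
  have hm : 1 ≤ m := by
    by_contra! h
    exact absurd (hR.apply_neg (k := m) (by omega)) (not_lt.mpr hi)
  rw [hR.card_filter_Ico_zero m] at hcard
  rw [show m = k by omega]

lemma eq_iff_card_filter_Ioo (hR : IsCenteredEnum M R) [DecidablePred M] {k j : ℤ} (hk : k ≤ 0)
    (hj : j < 0) : R k = j ↔ M j ∧ ((Finset.Ioo j 0).filter M).card = (-k).toNat := by
  refine ⟨fun h => h ▸ ⟨hR.mem k, hR.card_filter_Ioo_zero k⟩, fun ⟨hMj, hcard⟩ => ?_⟩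
  obtain ⟨m, rfl⟩ := hR.exists_eq hMj
  have hm : m ≤ 0 := by
    by_contra! h
    exact absurd (hR.apply_nonneg (k := m) (by omega)) (not_le.mpr hj)
  rw [hR.card_filter_Ioo_zero m] at hcard
  rw [show m = k by omega]

end IsCenteredEnum

def IsMarker (t : ℕ) (y : ℤ → ℕ) (i : ℤ) : Prop :=
  y i = 2 ∧ ∀ j : ℤ, i < j → j < i + t → y j = 1

def block (y : ℤ → ℕ) (i : ℤ) (n : ℕ) : Fin n → ℕ := fun k => y (i + k)

def zeroExtend {n : ℕ} (v : Fin n → ℕ) (z : ℤ) : ℕ :=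
  if h : 0 ≤ z ∧ z < n then v ⟨z.toNat, by omega⟩ else 0

def markerSet (t : ℕ) : Set (Fin t → ℕ) := {v | IsMarker t (zeroExtend v) 0}

def gapSet (t : ℕ) (g : ℤ) : Set (Fin (g.toNat + t) → ℕ) :=
  {v | 0 < g ∧ IsMarker t (zeroExtend v) 0 ∧ IsMarker t (zeroExtend v) g ∧
    ∀ l, 0 < l → l < g → ¬ IsMarker t (zeroExtend v) l}

open Classical in
/-- Only the positions `z ≤ n - t` carry their whole pattern inside a window of width `n`. -/
def countSet (t n m : ℕ) : Set (Fin n → ℕ) :=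
  {v | ((Finset.Ico 0 ((n : ℤ) - t + 1)).filter (IsMarker t (zeroExtend v))).card = m}

section Markers

variable {t : ℕ} {y : ℤ → ℕ}

lemma IsMarker.add_le {i j : ℤ} (hi : IsMarker t y i) (hj : IsMarker t y j) (hij : i < j) :
    i + t ≤ j := by
  by_contra! h
  have := hi.2 j hij h
  have := hj.1
  omega

open Classical in
lemma IsMarker.filter_Ico_sub_add_one (ht : 1 ≤ t) {i : ℤ} (hi : IsMarker t y i) (a : ℤ) :
    (Finset.Ico a (i - t + 1)).filter (IsMarker t y) = (Finset.Ico a i).filter (IsMarker t y) := by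
  ext z
  simp only [Finset.mem_filter, Finset.mem_Ico]
  refine ⟨fun ⟨⟨h1, h2⟩, hz⟩ => ⟨⟨h1, by omega⟩, hz⟩, fun ⟨⟨h1, h2⟩, hz⟩ => ⟨⟨h1, ?_⟩, hz⟩⟩
  have := hz.add_le hi h2
  omega

open Classical in
lemma IsMarker.filter_Ico_add (ht : 1 ≤ t) {i : ℤ} (hi : IsMarker t y i) (b : ℤ) :
    (Finset.Ico (i + t) b).filter (IsMarker t y) = (Finset.Ioo i b).filter (IsMarker t y) := by
  ext z
  simp only [Finset.mem_filter, Finset.mem_Ico, Finset.mem_Ioo]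
  refine ⟨fun ⟨⟨h1, h2⟩, hz⟩ => ⟨⟨by omega, h2⟩, hz⟩, fun ⟨⟨h1, h2⟩, hz⟩ => ⟨⟨?_, h2⟩, hz⟩⟩
  exact hi.add_le hz h1

lemma zeroExtend_block {i : ℤ} {n : ℕ} {z : ℤ} (h0 : 0 ≤ z) (hz : z < n) :
    zeroExtend (block y i n) z = y (i + z) := by
  simp only [zeroExtend, block, dif_pos (And.intro h0 hz)]
  congr 1
  omega

lemma isMarker_zeroExtend_block (ht : 1 ≤ t) {i : ℤ} {n : ℕ} {l : ℤ} (h0 : 0 ≤ l)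
    (hl : l + t ≤ n) : IsMarker t (zeroExtend (block y i n)) l ↔ IsMarker t y (i + l) := by
  unfold IsMarker
  rw [zeroExtend_block h0 (by omega)]
  refine and_congr_right fun _ => ⟨fun h j hj1 hj2 => ?_, fun h j hj1 hj2 => ?_⟩
  · have := h (j - i) (by omega) (by omega)
    rwa [zeroExtend_block (by omega) (by omega), add_sub_cancel] at this
  · rw [zeroExtend_block (by omega) (by omega)]
    exact h (i + j) (by omega) (by omega)

lemma block_mem_markerSet (ht : 1 ≤ t) (i : ℤ) : block y i t ∈ markerSet t ↔ IsMarker t y i := by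
  show IsMarker t (zeroExtend (block y i t)) 0 ↔ _
  simpa using isMarker_zeroExtend_block (y := y) (i := i) ht le_rfl (by simp)

lemma block_mem_gapSet (ht : 1 ≤ t) (i g : ℤ) :
    block y i (g.toNat + t) ∈ gapSet t g ↔ 0 < g ∧ IsMarker t y i ∧ IsMarker t y (i + g) ∧
      ∀ l, i < l → l < i + g → ¬ IsMarker t y l := by
  refine ⟨fun ⟨hg, h0, hgm, hbetween⟩ => ?_, fun ⟨hg, h0, hgm, hbetween⟩ => ?_⟩
  · refine ⟨hg, by simpa using (isMarker_zeroExtend_block ht le_rfl (by omega)).mp h0,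
      (isMarker_zeroExtend_block ht hg.le (by omega)).mp hgm, fun l hl1 hl2 hl => ?_⟩
    refine hbetween (l - i) (by omega) (by omega) ?_
    rwa [isMarker_zeroExtend_block ht (by omega) (by omega), add_sub_cancel]
  · refine ⟨hg, (isMarker_zeroExtend_block ht le_rfl (by omega)).mpr (by simpa using h0),
      (isMarker_zeroExtend_block ht hg.le (by omega)).mpr hgm, fun l hl1 hl2 hl => ?_⟩
    exact hbetween (i + l) (by omega) (by omega)
      ((isMarker_zeroExtend_block ht (by omega) (by omega)).mp hl)

open Classical in
lemma block_mem_countSet (ht : 1 ≤ t) (i : ℤ) (n m : ℕ) :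
    block y i n ∈ countSet t n m ↔
      ((Finset.Ico i (i + n - t + 1)).filter (IsMarker t y)).card = m := by
  have hbij : ((Finset.Ico 0 ((n : ℤ) - t + 1)).filter (IsMarker t (zeroExtend (block y i n)))).card
      = ((Finset.Ico i (i + n - t + 1)).filter (IsMarker t y)).card := by
    refine Finset.card_bij' (fun z _ => i + z) (fun z _ => z - i) (fun z hz => ?_) (fun z hz => ?_)
      (fun z _ => by ring) (fun z _ => by ring)
    · simp only [Finset.mem_filter, Finset.mem_Ico] at hz ⊢
      exact ⟨⟨by omega, by omega⟩, (isMarker_zeroExtend_block ht hz.1.1 (by omega)).mp hz.2⟩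
    · simp only [Finset.mem_filter, Finset.mem_Ico] at hz ⊢
      refine ⟨⟨by omega, by omega⟩, (isMarker_zeroExtend_block ht (by omega) (by omega)).mpr ?_⟩
      rw [add_sub_cancel]
      exact hz.2
  exact Iff.of_eq (congrArg (· = m) hbij)

end Markers

namespace IsCenteredEnum

variable {t : ℕ} {y : ℤ → ℕ} {R : ℤ → ℤ}

lemma eq_natCast_iff_block_mem (hR : IsCenteredEnum (IsMarker t y) R) (ht : 1 ≤ t) {k : ℤ}
    (hk : 1 ≤ k) (i : ℕ) :
    R k = i ↔ block y 0 i ∈ countSet t i (k - 1).toNat ∧ block y i t ∈ markerSet t := by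
  classical
  rw [block_mem_countSet ht, block_mem_markerSet ht, zero_add,
    hR.eq_iff_card_filter_Ico hk (by positivity)]
  constructor
  · rintro ⟨hMi, hcard⟩
    rw [hMi.filter_Ico_sub_add_one ht]
    exact ⟨hcard, hMi⟩
  · rintro ⟨hcard, hMi⟩
    rw [hMi.filter_Ico_sub_add_one ht] at hcard
    exact ⟨hMi, hcard⟩

lemma eq_natCast_and_sub_eq_iff_block_mem (hR : IsCenteredEnum (IsMarker t y) R) (ht : 1 ≤ t)
    {k : ℤ} (hk : 1 ≤ k) (i : ℕ) (g : ℤ) :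
    R k = i ∧ R (k + 1) - R k = g ↔
      block y 0 i ∈ countSet t i (k - 1).toNat ∧ block y i (g.toNat + t) ∈ gapSet t g := by
  classical
  rw [block_mem_countSet ht, block_mem_gapSet ht, zero_add]
  constructor
  · rintro ⟨hRk, hgap⟩
    have hMi : IsMarker t y i := hRk ▸ hR.mem k
    have hlt := hR.strictMono (lt_add_one k)
    refine ⟨?_, by omega, hMi, by simpa [← hRk, ← hgap] using hR.mem (k + 1),
      fun l h1 h2 => hR.notMem_of_lt_of_lt k l (by omega) (by omega)⟩
    rw [hMi.filter_Ico_sub_add_one ht, ← hRk]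
    exact hR.card_filter_Ico_zero k
  · rintro ⟨hcard, hg, hMi, hMg, hbetween⟩
    rw [hMi.filter_Ico_sub_add_one ht] at hcard
    have hRk : R k = i := (hR.eq_iff_card_filter_Ico hk (by positivity)).mpr ⟨hMi, hcard⟩
    have := hR.succ_eq_of_forall_notMem (k := k) hMg (by omega) (hRk ▸ hbetween)
    omega

lemma succ_eq_and_sub_eq_iff_block_mem (hR : IsCenteredEnum (IsMarker t y) R) (ht : 1 ≤ t)
    {k : ℤ} (hk : k + 1 ≤ 0) (i : ℕ) (g : ℤ) :
    R (k + 1) = -(i + 1) ∧ R (k + 1) - R k = g ↔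
      block y (-(i + 1) - g.toNat) (g.toNat + t) ∈ gapSet t g ∧
        block y (t - (i + 1)) i ∈ countSet t i (-(k + 1)).toNat := by
  classical
  set j : ℤ := -(i + 1)
  rw [block_mem_gapSet ht, block_mem_countSet ht, show (t : ℤ) - (i + 1) = j + t by ring,
    show j + t + i - t + 1 = 0 by ring]
  constructor
  · rintro ⟨hRk1, hgap⟩
    have hMj : IsMarker t y j := hRk1 ▸ hR.mem (k + 1)
    have hlt := hR.strictMono (lt_add_one k)
    rw [show j - g.toNat = R k by omega, show R k + g = j by omega]
    refine ⟨⟨by omega, hR.mem k, hMj, fun l h1 h2 => hR.notMem_of_lt_of_lt k l h1 (by omega)⟩, ?_⟩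
    rw [hMj.filter_Ico_add ht, ← hRk1]
    exact hR.card_filter_Ioo_zero (k + 1)
  · rintro ⟨⟨hg, hMjg, hMj, hbetween⟩, hcard⟩
    rw [show j - g.toNat + g = j by omega] at hMj hbetween
    rw [hMj.filter_Ico_add ht] at hcard
    have hRk1 : R (k + 1) = j := (hR.eq_iff_card_filter_Ioo hk (by omega)).mpr ⟨hMj, hcard⟩
    obtain ⟨m, hm⟩ := hR.exists_eq hMjg
    have hm1 : R (m + 1) = j := hR.succ_eq_of_forall_notMem hMj (by omega) (hm ▸ hbetween)
    obtain rfl : m = k := by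
      have := hR.strictMono.injective (hm1.trans hRk1.symm)
      omega
    omega

end IsCenteredEnum

lemma ENNReal.exists_pow_le_ofReal_mul_pow {q : ℝ≥0∞} (hq0 : q ≠ 0) (hq1 : q < 1) {u : ℕ}
    (hu : 0 < u) : ∃ c : ℝ, 0 < c ∧ ∃ d : ℝ, 0 < d ∧ d < 1 ∧
      ∀ n e : ℕ, n < u * (e + 1) → q ^ e ≤ ENNReal.ofReal (c * d ^ n) := by
  set r := q.toReal
  have hr0 : 0 < r := ENNReal.toReal_pos hq0 hq1.ne_top
  have hr1 : r < 1 := ENNReal.toReal_lt_of_lt_ofReal (by simpa using hq1)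
  refine ⟨r⁻¹, inv_pos.mpr hr0, r ^ (1 / u : ℝ), Real.rpow_pos_of_pos hr0 _,
    Real.rpow_lt_one hr0.le hr1 (by positivity), fun n e hne => ?_⟩
  rw [← ENNReal.ofReal_toReal (ENNReal.pow_ne_top hq1.ne_top), ENNReal.toReal_pow]
  refine ENNReal.ofReal_le_ofReal ?_
  have hexp : (n : ℝ) / u ≤ (e + 1 : ℕ) := by
    rw [div_le_iff₀ (by positivity)]
    exact_mod_cast (mul_comm u _ ▸ hne).le
  calc r ^ e = r⁻¹ * r ^ (e + 1) := by field_simp; ring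
    _ ≤ r⁻¹ * r ^ ((n : ℝ) / u) := by
      gcongr
      rw [← Real.rpow_natCast]
      exact Real.rpow_le_rpow_of_exponent_ge hr0 hr1.le hexp
    _ = r⁻¹ * (r ^ (1 / u : ℝ)) ^ n := by
      rw [← Real.rpow_natCast, ← Real.rpow_mul hr0.le, one_div_mul_eq_div]

lemma MeasureTheory.Measure.eq_of_forall_measure_singleton_eq_mul {α : Type*} [MeasurableSpace α]
    [Countable α] [MeasurableSingletonClass α] {μ ν : Measure α} [IsProbabilityMeasure μ]
    [IsProbabilityMeasure ν] {f : α → ℝ≥0∞} {c d : ℝ≥0∞} (hμ : ∀ a, μ {a} = c * f a)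
    (hν : ∀ a, ν {a} = d * f a) : μ = ν := by
  have hsum (ρ : Measure α) [IsProbabilityMeasure ρ] : ∑' a, ρ {a} = 1 := by
    simpa using tsum_indicator_apply_singleton ρ Set.univ MeasurableSet.univ
  have hc : c * ∑' a, f a = 1 := by simp_rw [← ENNReal.tsum_mul_left, ← hμ, hsum]
  have hd : d * ∑' a, f a = 1 := by simp_rw [← ENNReal.tsum_mul_left, ← hν, hsum]
  have hcd : c = d := by
    rw [ENNReal.eq_inv_of_mul_eq_one_left hc, ENNReal.eq_inv_of_mul_eq_one_left hd]
  exact Measure.ext_of_singleton fun a => by rw [hμ, hν, hcd]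

lemma MeasureTheory.measure_eq_tsum_inter_preimage_natCast {Ω : Type*} [MeasurableSpace Ω]
    {P : Measure Ω} {f : Ω → ℤ} (hf : Measurable f) (hf0 : ∀ᵐ ω ∂P, 0 ≤ f ω) {S : Set Ω}
    (hS : MeasurableSet S) : P S = ∑' i : ℕ, P ({ω | f ω = i} ∩ S) := by
  have hU : {ω | 0 ≤ f ω} ∩ S = ⋃ i : ℕ, {ω | f ω = i} ∩ S := by
    ext ω
    simp only [Set.mem_inter_iff, Set.mem_ofPred_eq, Set.mem_iUnion]
    exact ⟨fun ⟨h0, hs⟩ => ⟨(f ω).toNat, by omega, hs⟩, fun ⟨i, hi, hs⟩ => ⟨by omega, hs⟩⟩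
  have hS0 : ({ω | 0 ≤ f ω} ∩ S : Set Ω) =ᵐ[P] S :=
    hf0.mono fun ω h => propext ⟨And.right, And.intro h⟩
  rw [← measure_congr hS0, hU, measure_iUnion]
  · refine fun i j hij => Set.disjoint_left.mpr fun ω hi hj => hij ?_
    have := hi.1.symm.trans hj.1
    omega
  · exact fun i => (hf (measurableSet_singleton _)).inter hS

section Window

variable {Ω : Type*} {x : ℤ → Ω → ℕ}

def window (x : ℤ → Ω → ℕ) (i : ℤ) (n : ℕ) (ω : Ω) : Fin n → ℕ := block (fun j => x j ω) i n

lemma window_add (i : ℤ) (m n : ℕ) (ω : Ω) :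
    window x i (m + n) ω = Fin.append (window x i m ω) (window x (i + m) n ω) := by
  funext k
  refine Fin.addCases (fun k => ?_) (fun k => ?_) k
  · simp [window, block]
  · simp [window, block, add_assoc]

lemma window_preimage_inter_window_preimage (i : ℤ) {m n : ℕ} (C₁ : Set (Fin m → ℕ))
    (C₂ : Set (Fin n → ℕ)) :
    window x i m ⁻¹' C₁ ∩ window x (i + m) n ⁻¹' C₂ =
      window x i (m + n) ⁻¹' ((Fin.appendEquiv m n).symm ⁻¹' C₁ ×ˢ C₂) := by
  ext ω
  simp only [Set.mem_inter_iff, Set.mem_preimage, window_add, Fin.appendEquiv_symm_apply,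
    Set.mem_prod, Fin.append_left, Fin.append_right]

def blocksAvoid (x : ℤ → Ω → ℕ) (t : ℕ) (D : Set (Fin t → ℕ)) (m : ℕ) (b : ℤ) : Set Ω :=
  {ω | ∀ l < m, window x (b + t * l) t ω ∉ D}

lemma blocksAvoid_succ (t : ℕ) (D : Set (Fin t → ℕ)) (m : ℕ) (b : ℤ) :
    blocksAvoid x t D (m + 1) b = (window x b t ⁻¹' D)ᶜ ∩ blocksAvoid x t D m (b + t) := by
  ext ω
  simp only [blocksAvoid, Set.mem_ofPred_eq, Nat.forall_lt_succ_left, Set.mem_inter_iff,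
    Set.mem_compl_iff, Set.mem_preimage, Nat.cast_zero, mul_zero, add_zero, Nat.cast_succ]
  exact and_congr_right fun _ => forall₂_congr fun l _ => by
    rw [show b + (t : ℤ) * (l + 1) = b + t + t * l by ring]

lemma mem_blocksAvoid_markerSet {t : ℕ} (ht : 1 ≤ t) {ω : Ω} {b : ℤ} {L : ℕ}
    (h : ∀ z, b ≤ z → z < b + L → ¬ IsMarker t (fun j => x j ω) z) :
    ω ∈ blocksAvoid x t (markerSet t) (L / t) b := by
  intro l hl
  have hle : t * (l + 1) ≤ L := (Nat.mul_le_mul_left t hl).trans (Nat.mul_div_le L t)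
  have : (t : ℤ) * l + t ≤ L := by exact_mod_cast (mul_add_one t l).symm.trans_le hle
  have : (0 : ℤ) ≤ t * l := by positivity
  exact (block_mem_markerSet ht _).not.mpr (h _ (by omega) (by omega))

variable [MeasurableSpace Ω] {P : Measure Ω}

lemma measurable_window (hmeas : ∀ i, Measurable (x i)) (i : ℤ) (n : ℕ) :
    Measurable (window x i n) :=
  measurable_pi_lambda _ fun _ => hmeas _

lemma map_window (hmeas : ∀ i, Measurable (x i)) (hindep : iIndepFun x P)
    (hident : ∀ i, P.map (x i) = P.map (x 0)) (i : ℤ) (n : ℕ) :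
    P.map (window x i n) = Measure.pi fun _ : Fin n => P.map (x 0) := by
  have hinj : Function.Injective fun k : Fin n => i + (k : ℤ) := fun a b h => by
    simpa [Fin.ext_iff] using h
  rw [show window x i n = fun ω (k : Fin n) => x (i + k) ω from rfl,
    (hindep.precomp hinj).map_fun_eq_pi_map fun k => (hmeas _).aemeasurable]
  simp only [hident]

lemma measure_window_preimage_eq (hmeas : ∀ i, Measurable (x i)) (hindep : iIndepFun x P)
    (hident : ∀ i, P.map (x i) = P.map (x 0)) (i : ℤ) {n : ℕ} (C : Set (Fin n → ℕ)) :
    P (window x i n ⁻¹' C) = P (window x 0 n ⁻¹' C) := by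
  have hC := (Set.to_countable C).measurableSet
  rw [← Measure.map_apply (measurable_window hmeas _ _) hC,
    ← Measure.map_apply (measurable_window hmeas _ _) hC, map_window hmeas hindep hident,
    map_window hmeas hindep hident]

lemma indepFun_window_window (hmeas : ∀ i, Measurable (x i)) (hindep : iIndepFun x P) (i : ℤ)
    (m n : ℕ) : IndepFun (window x i m) (window x (i + m) n) P := by
  have h := hindep.indepFun_finset (Finset.Ico i (i + m)) (Finset.Ico (i + m) (i + m + n))
    (Finset.Ico_disjoint_Ico_consecutive _ _ _) hmeas
  exact h.comp
    (φ := fun z (k : Fin m) => z ⟨i + k, Finset.mem_Ico.mpr ⟨by omega, by omega⟩⟩)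
    (ψ := fun z (k : Fin n) => z ⟨i + m + k, Finset.mem_Ico.mpr ⟨by omega, by omega⟩⟩)
    (measurable_pi_lambda _ fun _ => measurable_pi_apply _)
    (measurable_pi_lambda _ fun _ => measurable_pi_apply _)

lemma measure_window_inter_window (hmeas : ∀ i, Measurable (x i)) (hindep : iIndepFun x P)
    (i : ℤ) {m n : ℕ} (C₁ : Set (Fin m → ℕ)) (C₂ : Set (Fin n → ℕ)) :
    P (window x i m ⁻¹' C₁ ∩ window x (i + m) n ⁻¹' C₂) =
      P (window x i m ⁻¹' C₁) * P (window x (i + m) n ⁻¹' C₂) :=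
  (indepFun_window_window hmeas hindep i m n).measure_inter_preimage_eq_mul _ _
    (Set.to_countable _).measurableSet (Set.to_countable _).measurableSet

lemma measure_window_inter_blocksAvoid (hmeas : ∀ i, Measurable (x i)) (hindep : iIndepFun x P)
    (hident : ∀ i, P.map (x i) = P.map (x 0)) [IsProbabilityMeasure P] (t : ℕ)
    (D : Set (Fin t → ℕ)) (m : ℕ) (l : ℤ) (w : ℕ) (C : Set (Fin w → ℕ)) :
    P (window x l w ⁻¹' C ∩ blocksAvoid x t D m (l + w)) =
      P (window x l w ⁻¹' C) * (1 - P (window x 0 t ⁻¹' D)) ^ m := by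
  induction m generalizing w C with
  | zero => simp [blocksAvoid]
  | succ m ih =>
    rw [blocksAvoid_succ, ← Set.inter_assoc, ← Set.preimage_compl,
      window_preimage_inter_window_preimage, show l + w + t = l + (w + t : ℕ) by push_cast; ring,
      ih, ← window_preimage_inter_window_preimage, measure_window_inter_window hmeas hindep,
      Set.preimage_compl, prob_compl_eq_one_sub ((Set.to_countable D).measurableSet.preimage
        (measurable_window hmeas _ _)), measure_window_preimage_eq hmeas hindep hident (l + w) D,
      pow_succ', mul_assoc]

lemma measure_blocksAvoid (hmeas : ∀ i, Measurable (x i)) (hindep : iIndepFun x P)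
    (hident : ∀ i, P.map (x i) = P.map (x 0)) [IsProbabilityMeasure P] (t : ℕ)
    (D : Set (Fin t → ℕ)) (m : ℕ) (b : ℤ) :
    P (blocksAvoid x t D m b) = (1 - P (window x 0 t ⁻¹' D)) ^ m := by
  simpa using measure_window_inter_blocksAvoid hmeas hindep hident t D m b 0 Set.univ

lemma measure_window_markerSet_ne_zero (hmeas : ∀ i, Measurable (x i)) (hindep : iIndepFun x P)
    (hident : ∀ i, P.map (x i) = P.map (x 0)) {t : ℕ} (ht : 1 ≤ t) (h1 : P (x 0 ⁻¹' {1}) ≠ 0)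
    (h2 : P (x 0 ⁻¹' {2}) ≠ 0) : P (window x 0 t ⁻¹' markerSet t) ≠ 0 := by
  have := hindep.isProbabilityMeasure
  set v : Fin t → ℕ := fun j => if (j : ℕ) = 0 then 2 else 1
  have hv : v ∈ markerSet t := by
    refine ⟨by simp [zeroExtend, v]; omega, fun j hj1 hj2 => ?_⟩
    simp [zeroExtend, v, show 0 ≤ j ∧ j < t by omega]
    omega
  have hvmeas : P (window x 0 t ⁻¹' {v}) = ∏ j, P (x 0 ⁻¹' {v j}) := by
    rw [← Measure.map_apply (measurable_window hmeas 0 t) (measurableSet_singleton v),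
      map_window hmeas hindep hident, Measure.pi_singleton]
    simp_rw [Measure.map_apply (hmeas 0) (measurableSet_singleton _)]
  refine (lt_of_lt_of_le ?_
    (measure_mono (Set.preimage_mono (Set.singleton_subset_iff.mpr hv)))).ne'
  rw [hvmeas, pos_iff_ne_zero, Finset.prod_ne_zero_iff]
  intro j _
  by_cases hj : (j : ℕ) = 0 <;> simp [v, hj, h1, h2]

lemma measure_window_markerSet_lt_one [IsProbabilityMeasure P] (hmeas : Measurable (x 0)) {t : ℕ}
    (ht : 1 ≤ t) (h1 : P (x 0 ⁻¹' {1}) ≠ 0) : P (window x 0 t ⁻¹' markerSet t) < 1 := by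
  have hsub : window x 0 t ⁻¹' markerSet t ⊆ (x 0 ⁻¹' {1})ᶜ := fun ω hω hω1 => by
    have := ((block_mem_markerSet ht 0).mp hω).1
    simp_all
  calc _ ≤ P (x 0 ⁻¹' {1})ᶜ := measure_mono hsub
    _ = 1 - P (x 0 ⁻¹' {1}) := prob_compl_eq_one_sub (hmeas (measurableSet_singleton 1))
    _ < 1 := ENNReal.sub_lt_self ENNReal.one_ne_top one_ne_zero h1

end Window

section MarkerGaps

variable {Ω : Type*} [MeasurableSpace Ω] {P : Measure Ω} {x : ℤ → Ω → ℕ} {t : ℕ} {R : ℤ → Ω → ℤ}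

lemma measurable_gap (hRmeas : ∀ k, Measurable (R k)) (k : ℤ) :
    Measurable fun ω => R (k + 1) ω - R k ω :=
  (hRmeas _).sub (hRmeas _)

def gapWeight (P : Measure Ω) (x : ℤ → Ω → ℕ) (t : ℕ) (g : ℤ) : ℝ≥0∞ :=
  P (window x 0 (g.toNat + t) ⁻¹' gapSet t g)

lemma measure_gap_eq_mul_gapWeight_of_pos (hmeas : ∀ i, Measurable (x i))
    (hindep : iIndepFun x P) (hident : ∀ i, P.map (x i) = P.map (x 0)) (ht : 1 ≤ t)
    (hRmeas : ∀ k, Measurable (R k))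
    (hR : ∀ᵐ ω ∂P, IsCenteredEnum (IsMarker t fun j => x j ω) fun k => R k ω)
    {k : ℤ} (hk : 1 ≤ k) (g : ℤ) :
    P {ω | R (k + 1) ω - R k ω = g} =
      (∑' i : ℕ, P (window x 0 i ⁻¹' countSet t i (k - 1).toNat)) * gapWeight P x t g := by
  rw [measure_eq_tsum_inter_preimage_natCast (S := {ω | R (k + 1) ω - R k ω = g}) (hRmeas k)
    (hR.mono fun ω h => h.apply_nonneg hk) (measurable_gap hRmeas k (measurableSet_singleton g)),
    ← ENNReal.tsum_mul_right]
  refine tsum_congr fun i => ?_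
  have hsplit := measure_window_inter_window hmeas hindep 0 (countSet t i (k - 1).toNat)
    (gapSet t g)
  rw [zero_add, measure_window_preimage_eq hmeas hindep hident i] at hsplit
  rw [gapWeight, ← hsplit]
  exact measure_congr (hR.mono fun ω h => propext (h.eq_natCast_and_sub_eq_iff_block_mem ht hk i g))

lemma measure_gap_eq_mul_gapWeight_of_neg (hmeas : ∀ i, Measurable (x i))
    (hindep : iIndepFun x P) (hident : ∀ i, P.map (x i) = P.map (x 0)) (ht : 1 ≤ t)
    (hRmeas : ∀ k, Measurable (R k))
    (hR : ∀ᵐ ω ∂P, IsCenteredEnum (IsMarker t fun j => x j ω) fun k => R k ω)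
    {k : ℤ} (hk : k + 1 ≤ 0) (g : ℤ) :
    P {ω | R (k + 1) ω - R k ω = g} =
      (∑' i : ℕ, P (window x 0 i ⁻¹' countSet t i (-(k + 1)).toNat)) * gapWeight P x t g := by
  rw [measure_eq_tsum_inter_preimage_natCast (f := fun ω => -R (k + 1) ω - 1)
    (S := {ω | R (k + 1) ω - R k ω = g}) ((hRmeas _).neg.sub measurable_const)
    (hR.mono fun ω h => by have := h.apply_neg hk; omega)
    (measurable_gap hRmeas k (measurableSet_singleton g)), ← ENNReal.tsum_mul_right]
  refine tsum_congr fun i => ?_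
  have hsplit := measure_window_inter_window hmeas hindep (-(i + 1) - g.toNat) (gapSet t g)
    (countSet t i (-(k + 1)).toNat)
  rw [show -(i + 1) - g.toNat + ((g.toNat + t : ℕ) : ℤ) = t - (i + 1) by push_cast; ring,
    measure_window_preimage_eq hmeas hindep hident (-(i + 1) - g.toNat),
    measure_window_preimage_eq hmeas hindep hident (t - (i + 1)), mul_comm] at hsplit
  rw [gapWeight, ← hsplit]
  refine measure_congr (hR.mono fun ω h => propext ?_)
  have hval : -R (k + 1) ω - 1 = i ↔ R (k + 1) ω = -(i + 1) := by omega
  exact (and_congr_left' hval).trans (h.succ_eq_and_sub_eq_iff_block_mem ht hk i g)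

lemma identDistrib_gap (hmeas : ∀ i, Measurable (x i))
    (hindep : iIndepFun x P) (hident : ∀ i, P.map (x i) = P.map (x 0)) (ht : 1 ≤ t)
    (hRmeas : ∀ k, Measurable (R k))
    (hR : ∀ᵐ ω ∂P, IsCenteredEnum (IsMarker t fun j => x j ω) fun k => R k ω)
    {k k' : ℤ} (hk : k ≠ 0) (hk' : k' ≠ 0) :
    IdentDistrib (fun ω => R (k + 1) ω - R k ω) (fun ω => R (k' + 1) ω - R k' ω) P P := by
  have hprob := hindep.isProbabilityMeasure
  have hlaw (k : ℤ) (hk : k ≠ 0) : ∃ c, ∀ g,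
      P.map (fun ω => R (k + 1) ω - R k ω) {g} = c * gapWeight P x t g := by
    simp_rw [Measure.map_apply (measurable_gap hRmeas k) (measurableSet_singleton _)]
    rcases le_or_gt k 0 with hk0 | hk0
    · exact ⟨_, measure_gap_eq_mul_gapWeight_of_neg hmeas hindep hident ht hRmeas hR (by omega)⟩
    · exact ⟨_, measure_gap_eq_mul_gapWeight_of_pos hmeas hindep hident ht hRmeas hR hk0⟩
  obtain ⟨c, hc⟩ := hlaw k hk
  obtain ⟨c', hc'⟩ := hlaw k' hk'
  have := Measure.isProbabilityMeasure_map (μ := P) (measurable_gap hRmeas k).aemeasurable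
  have := Measure.isProbabilityMeasure_map (μ := P) (measurable_gap hRmeas k').aemeasurable
  exact ⟨(measurable_gap hRmeas k).aemeasurable, (measurable_gap hRmeas k').aemeasurable,
    Measure.eq_of_forall_measure_singleton_eq_mul hc hc'⟩

lemma measure_gap_tail_le (hmeas : ∀ i, Measurable (x i))
    (hindep : iIndepFun x P) (hident : ∀ i, P.map (x i) = P.map (x 0)) (ht : 1 ≤ t)
    (hRmeas : ∀ k, Measurable (R k))
    (hR : ∀ᵐ ω ∂P, IsCenteredEnum (IsMarker t fun j => x j ω) fun k => R k ω)
    {k : ℤ} (hk : 1 ≤ k) (n : ℕ) :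
    P {ω | (n : ℤ) ≤ R (k + 1) ω - R k ω} ≤
      (1 - P (window x 0 t ⁻¹' markerSet t)) ^ ((n - t) / t) := by
  have := hindep.isProbabilityMeasure
  set q := (1 - P (window x 0 t ⁻¹' markerSet t)) ^ ((n - t) / t)
  have hRk0 : ∀ᵐ ω ∂P, 0 ≤ R k ω := hR.mono fun ω h => h.apply_nonneg hk
  have hterm (i : ℕ) :
      P ({ω | R k ω = i} ∩ {ω | (n : ℤ) ≤ R (k + 1) ω - R k ω}) ≤
        P ({ω | R k ω = i} ∩ .univ) * q := by
    have hsplit := window_preimage_inter_window_preimage (x := x) 0 (countSet t i (k - 1).toNat)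
      (markerSet t)
    rw [zero_add] at hsplit
    set A := window x 0 (i + t) ⁻¹' _
    have hRk : {ω | R k ω = i} =ᵐ[P] A := hR.mono fun ω h => by
      rw [← hsplit]
      exact propext (h.eq_natCast_iff_block_mem ht hk i)
    have hsub : ({ω | R k ω = i} ∩ {ω | (n : ℤ) ≤ R (k + 1) ω - R k ω} : Set Ω) ≤ᵐ[P]
        (A ∩ blocksAvoid x t (markerSet t) ((n - t) / t) (0 + (i + t : ℕ)) : Set Ω) :=
      (hR.and hRk).mono fun ω ⟨h, hA⟩ ⟨(hi : R k ω = i), (hn : (n : ℤ) ≤ R (k + 1) ω - R k ω)⟩ =>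
        ⟨hA.mp hi,
        mem_blocksAvoid_markerSet ht fun z h1 h2 =>
          h.notMem_of_lt_of_lt k z (by omega) (by omega)⟩
    calc _ ≤ P (A ∩ blocksAvoid x t (markerSet t) ((n - t) / t) (0 + (i + t : ℕ))) :=
          measure_mono_ae hsub
      _ = P A * q := measure_window_inter_blocksAvoid hmeas hindep hident t _ _ 0 (i + t) _
      _ = _ := by rw [Set.inter_univ, measure_congr hRk]
  rw [measure_eq_tsum_inter_preimage_natCast (S := {ω | (n : ℤ) ≤ R (k + 1) ω - R k ω})
    (hRmeas k) hRk0 (measurable_gap hRmeas k measurableSet_Ici)]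
  calc _ ≤ ∑' i : ℕ, P ({ω | R k ω = i} ∩ .univ) * q := ENNReal.tsum_le_tsum hterm
    _ = q := by
      rw [ENNReal.tsum_mul_right, ← measure_eq_tsum_inter_preimage_natCast (hRmeas k) hRk0
        MeasurableSet.univ, measure_univ, one_mul]

lemma measure_central_gap_tail_le (hmeas : ∀ i, Measurable (x i))
    (hindep : iIndepFun x P) (hident : ∀ i, P.map (x i) = P.map (x 0)) (ht : 1 ≤ t)
    (hR : ∀ᵐ ω ∂P, IsCenteredEnum (IsMarker t fun j => x j ω) fun k => R k ω) (n : ℕ) :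
    P {ω | (n : ℤ) ≤ R 1 ω - R 0 ω} ≤
      2 * (1 - P (window x 0 t ⁻¹' markerSet t)) ^ (n / 2 / t) := by
  have := hindep.isProbabilityMeasure
  have hsub : {ω | (n : ℤ) ≤ R 1 ω - R 0 ω} ≤ᵐ[P]
      (blocksAvoid x t (markerSet t) (n / 2 / t) 0 ∪
        blocksAvoid x t (markerSet t) (n / 2 / t) (-(n / 2 : ℕ)) : Set Ω) := by
    refine hR.mono fun ω h (hn : (n : ℤ) ≤ R 1 ω - R 0 ω) => ?_
    have h0 := h.apply_zero_neg
    have h1 := h.apply_one_nonneg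
    by_cases hR1 : ((n / 2 : ℕ) : ℤ) ≤ R 1 ω
    · refine Or.inl (mem_blocksAvoid_markerSet (b := 0) (L := n / 2) ht fun z hz1 hz2 =>
        h.notMem_of_lt_of_lt 0 z (by omega) (by rw [zero_add]; omega))
    · refine Or.inr (mem_blocksAvoid_markerSet (b := -(n / 2 : ℕ)) (L := n / 2) ht fun z hz1 hz2 =>
        h.notMem_of_lt_of_lt 0 z (by omega) (by rw [zero_add]; omega))
  calc _ ≤ _ := measure_mono_ae hsub
    _ ≤ _ := measure_union_le _ _
    _ = _ := by
      rw [measure_blocksAvoid hmeas hindep hident, measure_blocksAvoid hmeas hindep hident, two_mul]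

end MarkerGaps

theorem stmt17_general {Ω : Type*} [MeasurableSpace Ω] (P : Measure Ω) [IsProbabilityMeasure P]
    (a : ℕ) (ha : 2 ≤ a) (t : ℕ) (ht : 1 ≤ t)
    (p : ℕ → ℝ) (hp : ∀ s ∈ Finset.Icc 1 a, 0 < p s)
    (x : ℤ → Ω → ℕ) (hmeas : ∀ i, Measurable (x i))
    (hindep : iIndepFun x P)
    (hdist : ∀ i s, P {ω | x i ω = s} = ENNReal.ofReal (p s))
    (Mark : ℤ → Ω → Prop)
    (hMark : ∀ i ω, Mark i ω ↔
      (x i ω = 2 ∧ ∀ j : ℤ, i < j → j < i + t → x j ω = 1))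
    (R : ℤ → Ω → ℤ) (hRmeas : ∀ k, Measurable (R k))
    (hR : ∀ᵐ ω ∂P,
      (∀ k, Mark (R k ω) ω) ∧
      StrictMono (fun k => R k ω) ∧
      0 ≤ R 1 ω ∧ R 0 ω < 0 ∧
      (∀ k i, R k ω < i → i < R (k + 1) ω → ¬ Mark i ω)) :
    (∀ k k' : ℤ, k ≠ 0 → k' ≠ 0 →
      IdentDistrib (fun ω => R (k + 1) ω - R k ω)
        (fun ω => R (k' + 1) ω - R k' ω) P P) ∧
    (∃ c : ℝ, 0 < c ∧ ∃ d : ℝ, 0 < d ∧ d < 1 ∧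
      ∀ k : ℤ, k ≠ 0 → ∀ n : ℕ,
        P {ω | (n : ℤ) ≤ R (k + 1) ω - R k ω} ≤ ENNReal.ofReal (c * d ^ n)) ∧
    (∃ c : ℝ, 0 < c ∧ ∃ d : ℝ, 0 < d ∧ d < 1 ∧
      ∀ n : ℕ, P {ω | (n : ℤ) ≤ R 1 ω - R 0 ω} ≤ ENNReal.ofReal (c * d ^ n)) := by
  obtain rfl : Mark = fun i ω => IsMarker t (fun j => x j ω) i :=
    funext₂ fun i ω => propext (hMark i ω)
  have hR' : ∀ᵐ ω ∂P, IsCenteredEnum (IsMarker t fun j => x j ω) fun k => R k ω :=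
    hR.mono fun ω ⟨h₁, h₂, h₃, h₄, h₅⟩ => ⟨h₁, h₂, h₃, h₄, h₅⟩
  have hlaw (i : ℤ) (s : ℕ) : P (x i ⁻¹' {s}) = ENNReal.ofReal (p s) := hdist i s
  have hident (i : ℤ) : P.map (x i) = P.map (x 0) := Measure.ext_of_singleton fun s => by
    rw [Measure.map_apply (hmeas i) (measurableSet_singleton s),
      Measure.map_apply (hmeas 0) (measurableSet_singleton s), hlaw, hlaw]
  have hpos (s : ℕ) (hs : s ∈ Finset.Icc 1 a) : P (x 0 ⁻¹' {s}) ≠ 0 := by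
    simpa [hlaw] using hp s hs
  set Q := P (window x 0 t ⁻¹' markerSet t)
  have hQ0 : Q ≠ 0 := measure_window_markerSet_ne_zero hmeas hindep hident ht
    (hpos 1 (by simp; omega)) (hpos 2 (by simp; omega))
  have hQ1 : Q < 1 := measure_window_markerSet_lt_one (hmeas 0) ht (hpos 1 (by simp; omega))
  obtain ⟨c, hc, d, hd0, hd1, hcd⟩ := ENNReal.exists_pow_le_ofReal_mul_pow
    (tsub_pos_of_lt hQ1).ne' (ENNReal.sub_lt_self ENNReal.one_ne_top one_ne_zero hQ0)
    (show 0 < 2 * t by omega)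
  have hID (k k' : ℤ) (hk : k ≠ 0) (hk' : k' ≠ 0) :=
    identDistrib_gap hmeas hindep hident ht hRmeas hR' hk hk'
  refine ⟨hID, ⟨c, hc, d, hd0, hd1, fun k hk n => ?_⟩,
    ⟨2 * c, by positivity, d, hd0, hd1, fun n => ?_⟩⟩
  · refine ((hID k 1 hk one_ne_zero).measure_mem_eq (measurableSet_Ici (a := (n : ℤ)))).trans_le
      ((measure_gap_tail_le hmeas hindep hident ht hRmeas hR' le_rfl n).trans (hcd n _ ?_))
    have := Nat.lt_mul_div_succ (n - t) (show 0 < t by omega)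
    have := Nat.le_mul_of_pos_right t (by positivity : 0 < (n - t) / t + 1)
    rw [mul_assoc]
    omega
  · refine (measure_central_gap_tail_le hmeas hindep hident ht hR' n).trans ?_
    rw [mul_assoc, ENNReal.ofReal_mul zero_le_two, ENNReal.ofReal_ofNat]
    gcongr
    refine hcd n _ ?_
    have := Nat.lt_mul_div_succ (n / 2) (show 0 < t by omega)
    rw [mul_assoc]
    omega

/-- Let `p` be a probability vector on `{1,...,a}` with full support and let
`(x i)_{i ∈ ℤ}` be i.i.d. with distribution `p`.  A marker is an index `i` with
`x i = 2` and `x (i+1) = ... = x (i+t-1) = 1`.  Let `(R k)_{k ∈ ℤ}` enumerate the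
markers increasingly, with `R 1` the first marker at a nonnegative index and `R 0`
the last marker at a negative index.  Then the inter-marker gaps `R (k+1) - R k` for
`k ≠ 0` are identically distributed with exponential tails, and the central gap
`R 1 - R 0` also has exponential tails. -/
theorem stmt17 {Ω : Type*} [MeasurableSpace Ω] (P : Measure Ω) [IsProbabilityMeasure P]
    (a : ℕ) (ha : 2 ≤ a) (t : ℕ) (ht : 1 ≤ t)
    (p : ℕ → ℝ) (hp : ∀ s ∈ Finset.Icc 1 a, 0 < p s)
    (hp1 : ∑ s ∈ Finset.Icc 1 a, p s = 1)
    (x : ℤ → Ω → ℕ) (hmeas : ∀ i, Measurable (x i))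
    (hindep : iIndepFun x P)
    (hdist : ∀ i s, P {ω | x i ω = s} = ENNReal.ofReal (p s))
    (Mark : ℤ → Ω → Prop)
    (hMark : ∀ i ω, Mark i ω ↔
      (x i ω = 2 ∧ ∀ j : ℤ, i < j → j < i + t → x j ω = 1))
    (R : ℤ → Ω → ℤ) (hRmeas : ∀ k, Measurable (R k))
    (hR : ∀ᵐ ω ∂P,
      (∀ k, Mark (R k ω) ω) ∧
      StrictMono (fun k => R k ω) ∧
      0 ≤ R 1 ω ∧ R 0 ω < 0 ∧
      (∀ k i, R k ω < i → i < R (k + 1) ω → ¬ Mark i ω)) :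
    (∀ k k' : ℤ, k ≠ 0 → k' ≠ 0 →
      IdentDistrib (fun ω => R (k + 1) ω - R k ω)
        (fun ω => R (k' + 1) ω - R k' ω) P P) ∧
    (∃ c : ℝ, 0 < c ∧ ∃ d : ℝ, 0 < d ∧ d < 1 ∧
      ∀ k : ℤ, k ≠ 0 → ∀ n : ℕ,
        P {ω | (n : ℤ) ≤ R (k + 1) ω - R k ω} ≤ ENNReal.ofReal (c * d ^ n)) ∧
    (∃ c : ℝ, 0 < c ∧ ∃ d : ℝ, 0 < d ∧ d < 1 ∧
      ∀ n : ℕ, P {ω | (n : ℤ) ≤ R 1 ω - R 0 ω} ≤ ENNReal.ofReal (c * d ^ n)) :=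
  stmt17_general P a ha t ht p hp x hmeas hindep hdist Mark hMark R hRmeas hR
end
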